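/- Let κ > 1, s = 1/κ, ω = 1 − √(2κ−1)/κ, and β = (2κ − √(2κ−1) − 1)/(2(κ + √(2κ−1))). Then the symmetric 3×3 matrix P with entries a = −(1/β + 2)ω + 2(β+2) + β(s−1)/ω − 2(β+1)s, b = ((2β+1)(s−1) + ω)/2, c = β − ω(s+ω−1)/(2β(s−1)) − (β+1)s − ω + 1, d = (1−s)β, e = ω − (1−s)β, f = ω²/(β(1−s)), i.e. P = [[a, b, c], [b, d, e], [c, e, f]], is positive definite. -/

import Mathlib

/-!
With `r = √(2κ - 1)` the optimal parameters become rational in `r`: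
`κ = (r² + 1)/2`, `s = 2/(r² + 1)`, `ω = (r - 1)²/(r² + 1)` and `β = r(r - 1)/(r + 1)²`.
In these coordinates the leading principal minors of `P` are
`(2r² + 1)/(r(r + 1))`, `r²(r - 1)²/((r + 1)²(r² + 1))` and `2r²(r - 1)⁴/((r + 1)³(r² + 1)³)`,
all positive for `r > 1`, so Sylvester's criterion applies.
-/

open Matrix

/-- The symmetric matrix `P` with entries given by equations (9)-(14) of the paper. -/
noncomputable def Pmat (s β ω : ℝ) : Matrix (Fin 3) (Fin 3) ℝ :=
  !![-(1/β+2)*ω + 2*(β+2) + β*(s-1)/ω - 2*(β+1)*s,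
     ((2*β+1)*(s-1) + ω)/2,
     β - ω*(s+ω-1)/(2*β*(s-1)) - (β+1)*s - ω + 1;
     ((2*β+1)*(s-1) + ω)/2,
     (1-s)*β,
     ω - (1-s)*β;
     β - ω*(s+ω-1)/(2*β*(s-1)) - (β+1)*s - ω + 1,
     ω - (1-s)*β,
     ω^2/(β*(1-s))]

theorem Matrix.posDef_fin_three_of_minors {a b c d e f : ℝ} (ha : 0 < a)
    (hδ : 0 < a * d - b ^ 2) (hdet : 0 < !![a, b, c; b, d, e; c, e, f].det) :
    !![a, b, c; b, d, e; c, e, f].PosDef := by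
  refine .of_dotProduct_mulVec_pos ?_ fun x hx => ?_
  · ext i j
    fin_cases i <;> fin_cases j <;> rfl
  set δ := a * d - b ^ 2
  set Δ := !![a, b, c; b, d, e; c, e, f].det
  -- the `LDLᵀ` factorisation, scaled by `a * δ` to clear denominators
  have hLDL : a * δ * (star x ⬝ᵥ (!![a, b, c; b, d, e; c, e, f] *ᵥ x)) =
      δ * (a * x 0 + b * x 1 + c * x 2) ^ 2 + (δ * x 1 + (a * e - b * c) * x 2) ^ 2
        + a * Δ * x 2 ^ 2 := by
    simp only [dotProduct, Pi.star_apply, star_trivial, mulVec, of_apply, cons_val',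
      cons_val_fin_one, Fin.sum_univ_three, Fin.isValue, cons_val_zero, cons_val_one, cons_val,
      det_fin_three, δ, Δ]
    ring
  have hsum : 0 < δ * (a * x 0 + b * x 1 + c * x 2) ^ 2 + (δ * x 1 + (a * e - b * c) * x 2) ^ 2
      + a * Δ * x 2 ^ 2 := by
    by_cases h2 : x 2 = 0
    · by_cases h1 : x 1 = 0
      · have h0 : x 0 ≠ 0 := fun h0 => hx (by ext i; fin_cases i <;> assumption)
        simp only [h1, h2, mul_zero, add_zero, zero_pow two_ne_zero]
        positivity
      · simp only [h2, mul_zero, add_zero, zero_pow two_ne_zero]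
        positivity
    · positivity
  exact pos_of_mul_pos_right (hLDL ▸ hsum) (by positivity)

noncomputable def Popt (r : ℝ) : Matrix (Fin 3) (Fin 3) ℝ :=
  !![(2 * r ^ 2 + 1) / (r * (r + 1)),
     (1 - r) / (1 + r),
     (r - 1) ^ 2 * (r ^ 2 + r + 1) / (r * (r + 1) * (r ^ 2 + 1));
     (1 - r) / (1 + r),
     r * (r - 1) ^ 2 / ((r + 1) * (r ^ 2 + 1)),
     (r - 1) ^ 2 / ((r + 1) * (r ^ 2 + 1));
     (r - 1) ^ 2 * (r ^ 2 + r + 1) / (r * (r + 1) * (r ^ 2 + 1)),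
     (r - 1) ^ 2 / ((r + 1) * (r ^ 2 + 1)),
     (r - 1) ^ 2 * (r + 1) / (r * (r ^ 2 + 1))]

theorem Pmat_eq_Popt {r : ℝ} (hr : 0 < r) (hr1 : r ≠ 1) :
    Pmat (2 / (r ^ 2 + 1)) (r * (r - 1) / (r + 1) ^ 2) ((r - 1) ^ 2 / (r ^ 2 + 1)) = Popt r := by
  have hr2 : 1 - r ^ 2 ≠ 0 := by
    rw [show 1 - r ^ 2 = (1 - r) * (1 + r) by ring]
    exact mul_ne_zero (sub_ne_zero.mpr hr1.symm) (by positivity)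
  have hr2' : r ^ 2 - 1 ≠ 0 := by rw [← neg_sub]; exact neg_ne_zero.mpr hr2
  have hs : 2 / (r ^ 2 + 1) - 1 = (1 - r ^ 2) / (r ^ 2 + 1) := by field_simp; ring
  have hs' : 1 - 2 / (r ^ 2 + 1) = (r ^ 2 - 1) / (r ^ 2 + 1) := by field_simp; ring
  unfold Pmat Popt
  rw [hs, hs']
  ext i j
  fin_cases i <;> fin_cases j <;>
    simp only [Fin.isValue, Fin.zero_eta, Fin.mk_one, Fin.reduceFinMk, of_apply, cons_val',
      cons_val_one, cons_val_zero, cons_val_fin_one, cons_val] <;>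
    field_simp <;> ring

theorem Popt_det {r : ℝ} (hr : 0 < r) :
    (Popt r).det = 2 * r ^ 2 * (r - 1) ^ 4 / ((r + 1) ^ 3 * (r ^ 2 + 1) ^ 3) := by
  simp only [Popt, Fin.isValue, of_apply, cons_val', cons_val_one, cons_val_zero,
    cons_val_fin_one, cons_val, det_fin_three]
  field_simp
  ring

theorem Popt_posDef {r : ℝ} (hr : 1 < r) : (Popt r).PosDef := by
  have hr0 : 0 < r := by linarith
  have hr1 : r - 1 ≠ 0 := by linarith
  have hdet : 0 < (Popt r).det := by rw [Popt_det hr0]; positivity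
  refine posDef_fin_three_of_minors (by positivity) ?_ hdet
  have hδ : (2 * r ^ 2 + 1) / (r * (r + 1)) * (r * (r - 1) ^ 2 / ((r + 1) * (r ^ 2 + 1)))
      - ((1 - r) / (1 + r)) ^ 2 = r ^ 2 * (r - 1) ^ 2 / ((r + 1) ^ 2 * (r ^ 2 + 1)) := by
    field_simp
    ring
  rw [hδ]
  positivity

/-- Theorem 4 of the paper: for the optimal choices `ω = 1 − √(2κ−1)/κ` and
`β = (2κ − √(2κ−1) − 1)/(2(κ + √(2κ−1)))`, the matrix `P` is positive definite. -/
theorem stmt9 (κ ω β : ℝ) (hκ : 1 < κ)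
    (hω : ω = 1 - Real.sqrt (2*κ - 1)/κ)
    (hβ : β = (2*κ - Real.sqrt (2*κ - 1) - 1)/(2*(κ + Real.sqrt (2*κ - 1)))) :
    (Pmat (1/κ) β ω).PosDef := by
  set r := Real.sqrt (2 * κ - 1)
  have hr2 : r ^ 2 = 2 * κ - 1 := Real.sq_sqrt (by linarith)
  have hr : 1 < r := by nlinarith [Real.sqrt_nonneg (2 * κ - 1)]
  have hκr : κ = (r ^ 2 + 1) / 2 := by rw [hr2]; ring
  have hs : 1 / κ = 2 / (r ^ 2 + 1) := by rw [hκr]; field_simp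
  have hωr : ω = (r - 1) ^ 2 / (r ^ 2 + 1) := by rw [hω, hκr]; field_simp; ring
  have hβr : β = r * (r - 1) / (r + 1) ^ 2 := by rw [hβ, hκr]; field_simp; ring
  rw [hs, hωr, hβr, Pmat_eq_Popt (by linarith) hr.ne']
  exact Popt_posDef hr
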